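/- The set {q > 0 : κ(q) ≤ 0} equals the interval [2,3], where κ(q) = (4√π/3)·Γ(q-3/2)/Γ(q-3) (interpreted as 0 at the poles of Γ in the denominator). -/

import Mathlib

/-- The integrand of `κ(q)`. -/
noncomputable def kappaIntegrand (q x : ℝ) : ℝ :=
  (x ^ q - 1 + q * (1 - x) + (1 - x) ^ q) * (x * (1 - x)) ^ (-(5 / 2) : ℝ)

/-- `κ(q) = -(8/3)q + ∫_{1/2}^1 (x^q - 1 + q(1-x) + (1-x)^q)·(x(1-x))^{-5/2} dx`,
which takes values in `(-∞,∞]`: the integrand is nonnegative near `1`, and the integral is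
infinite exactly when it fails to be integrable. -/
noncomputable def kappa (q : ℝ) : ℝ :=
  -(8 / 3) * q + ∫ x in (1 / 2 : ℝ)..1, kappaIntegrand q x

/-!
For fixed `x ∈ (0, 1)` the integrand is strictly convex in `q`: `x ^ q` is strictly convex,
`(1 - x) ^ q` is convex and the weight `(x (1 - x)) ^ (-5/2)` is positive. Hence `κ` is strictly
convex on the (convex) set of `q > 0` where the integral converges. For `q = 2, 3` the numerator
is `q (1 - x) ^ 2`, and `(1 - x) ^ 2 (x (1 - x)) ^ (-5/2)` has an explicit primitive whose
increment over `[1/2, 1]` is `8/3`, so `κ(2) = κ(3) = 0`. A strictly convex function vanishing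
at `2` and `3` is nonpositive exactly on `[2, 3]`.
-/

open Real MeasureTheory Set intervalIntegral

lemma strictConvexOn_rpow_left {b : ℝ} (hb : 0 < b) (hb1 : b ≠ 1) :
    StrictConvexOn ℝ univ fun x : ℝ => b ^ x := by
  refine ⟨convex_univ, fun x _ y _ hxy s t hs ht hst => ?_⟩
  have hlog : log b ≠ 0 := log_ne_zero_of_pos_of_ne_one hb hb1
  have h := strictConvexOn_exp.2 (mem_univ (log b * x)) (mem_univ (log b * y))
    (by simpa [hlog] using hxy) hs ht hst
  simp only [smul_eq_mul, rpow_def_of_pos hb] at h ⊢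
  convert h using 2
  ring

lemma StrictConvexOn.setOf_nonpos_eq_Icc {s : Set ℝ} {f : ℝ → ℝ} (hf : StrictConvexOn ℝ s f)
    {a b : ℝ} (hab : a < b) (ha : a ∈ s) (hb : b ∈ s) (hfa : f a = 0) (hfb : f b = 0) :
    {x | x ∈ s ∧ f x ≤ 0} = Icc a b := by
  ext x
  constructor
  · rintro ⟨hx, hfx⟩
    by_contra hout
    rw [mem_Icc, not_and_or, not_le, not_le] at hout
    rcases hout with hxa | hbx
    · have h := hf.lt_on_openSegment hx hb (hxa.trans hab).ne
        (by rw [openSegment_eq_Ioo (hxa.trans hab)]; exact ⟨hxa, hab⟩)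
      rw [hfa, hfb, max_eq_right hfx] at h
      exact h.false
    · have h := hf.lt_on_openSegment ha hx (hab.trans hbx).ne
        (by rw [openSegment_eq_Ioo (hab.trans hbx)]; exact ⟨hab, hbx⟩)
      rw [hfa, hfb, max_eq_left hfx] at h
      exact h.false
  · intro hx
    rw [← segment_eq_Icc hab.le] at hx
    refine ⟨hf.1.segment_subset ha hb hx, ?_⟩
    simpa [hfa, hfb] using hf.convexOn.le_on_segment ha hb hx

noncomputable def kappaNumerator (q x : ℝ) : ℝ := x ^ q - 1 + q * (1 - x) + (1 - x) ^ q

lemma kappaIntegrand_eq (q x : ℝ) :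
    kappaIntegrand q x = kappaNumerator q x * (x * (1 - x)) ^ (-(5 / 2) : ℝ) := rfl

lemma kappaNumerator_two (x : ℝ) : kappaNumerator 2 x = 2 * (1 - x) ^ 2 := by
  simp only [kappaNumerator, rpow_two]
  ring

lemma kappaNumerator_three (x : ℝ) : kappaNumerator 3 x = 3 * (1 - x) ^ 2 := by
  have h : ∀ y : ℝ, y ^ (3 : ℝ) = y ^ 3 := fun y => by exact_mod_cast rpow_natCast y 3
  simp only [kappaNumerator, h]
  ring

lemma kappaNumerator_nonneg {q x : ℝ} (hq : 0 ≤ q) (hx : x ∈ Ioo (0 : ℝ) 1) :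
    0 ≤ kappaNumerator q x := by
  obtain ⟨hx0, hx1⟩ := hx
  have h1x : 0 < 1 - x := by linarith
  have h1xq : 0 ≤ (1 - x) ^ q := rpow_nonneg h1x.le q
  unfold kappaNumerator
  rcases le_total 1 q with h1 | h1
  · have hb : 1 + q * (x - 1) ≤ x ^ q := by
      simpa using one_add_mul_self_le_rpow_one_add (s := x - 1) (by linarith) h1
    nlinarith
  · have hxq : x ≤ x ^ q := by
      simpa using rpow_le_rpow_of_exponent_ge hx0 hx1.le h1
    have h1xq' : 1 - x ≤ (1 - x) ^ q := by
      simpa using rpow_le_rpow_of_exponent_ge h1x (by linarith) h1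
    nlinarith

lemma strictConvexOn_kappaNumerator {x : ℝ} (hx : x ∈ Ioo (0 : ℝ) 1) :
    StrictConvexOn ℝ univ fun q => kappaNumerator q x := by
  have h1x : 0 < 1 - x := by linarith [hx.2]
  refine ⟨convex_univ, fun a _ b _ hab s t hs ht hst => ?_⟩
  have h1 := (strictConvexOn_rpow_left hx.1 hx.2.ne).2 (mem_univ a) (mem_univ b) hab hs ht hst
  have h2 := (convexOn_rpow_left h1x).2 (mem_univ a) (mem_univ b) hs.le ht.le hst
  simp only [smul_eq_mul, kappaNumerator] at h1 h2 ⊢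
  linear_combination h1 + h2 + hst

lemma kappaIntegrand_nonneg {q x : ℝ} (hq : 0 ≤ q) (hx : x ∈ Ioo (0 : ℝ) 1) :
    0 ≤ kappaIntegrand q x := by
  have h1x : 0 < 1 - x := by linarith [hx.2]
  rw [kappaIntegrand_eq]
  exact mul_nonneg (kappaNumerator_nonneg hq hx) (rpow_nonneg (mul_pos hx.1 h1x).le _)

lemma strictConvexOn_kappaIntegrand {x : ℝ} (hx : x ∈ Ioo (0 : ℝ) 1) :
    StrictConvexOn ℝ univ fun q => kappaIntegrand q x := by
  have h1x : 0 < 1 - x := by linarith [hx.2]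
  refine ⟨convex_univ, fun a _ b _ hab s t hs ht hst => ?_⟩
  have h := mul_lt_mul_of_pos_right
    ((strictConvexOn_kappaNumerator hx).2 (mem_univ a) (mem_univ b) hab hs ht hst)
    (rpow_pos_of_pos (mul_pos hx.1 h1x) (-(5 / 2)))
  simp only [smul_eq_mul, kappaIntegrand_eq] at h ⊢
  linear_combination h

def kappaDomain : Set ℝ :=
  {q | 0 < q ∧ IntervalIntegrable (kappaIntegrand q) volume (1 / 2) 1}

lemma convex_kappaDomain : Convex ℝ kappaDomain := by
  intro a ⟨ha0, ha⟩ b ⟨hb0, hb⟩ s t hs ht hst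
  have hc0 : 0 < s • a + t • b := convex_Ioi (0 : ℝ) ha0 hb0 hs ht hst
  refine ⟨hc0, ((ha.const_mul s).add (hb.const_mul t)).mono_fun'
    (by unfold kappaIntegrand; fun_prop : Measurable _).aestronglyMeasurable ?_⟩
  rw [uIoc_of_le (by norm_num), ← restrict_Ioo_eq_restrict_Ioc]
  refine ae_restrict_of_forall_mem measurableSet_Ioo fun x hx => ?_
  have hx' : x ∈ Ioo (0 : ℝ) 1 := ⟨by linarith [hx.1], hx.2⟩
  dsimp only
  rw [norm_of_nonneg (kappaIntegrand_nonneg hc0.le hx')]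
  exact (strictConvexOn_kappaIntegrand hx').convexOn.2 (mem_univ a) (mem_univ b) hs ht hst

lemma strictConvexOn_kappa : StrictConvexOn ℝ kappaDomain kappa := by
  refine ⟨convex_kappaDomain, fun a ha b hb hab s t hs ht hst => ?_⟩
  have hc := convex_kappaDomain ha hb hs.le ht.le hst
  simp only [smul_eq_mul] at hc ⊢
  have hcombo := (ha.2.const_mul s).add (hb.2.const_mul t)
  have hpos : 0 < ∫ x in (1 / 2 : ℝ)..1,
      (s * kappaIntegrand a x + t * kappaIntegrand b x - kappaIntegrand (s * a + t * b) x) := by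
    refine intervalIntegral_pos_of_pos_on (hcombo.sub hc.2) (fun x hx => sub_pos.2 ?_)
      (by norm_num)
    simpa using (strictConvexOn_kappaIntegrand ⟨by linarith [hx.1], hx.2⟩).2
      (mem_univ a) (mem_univ b) hab hs ht hst
  rw [integral_sub hcombo hc.2, integral_add (ha.2.const_mul s) (hb.2.const_mul t),
    intervalIntegral.integral_const_mul, intervalIntegral.integral_const_mul] at hpos
  unfold kappa
  linear_combination hpos

noncomputable def kappaBase (x : ℝ) : ℝ := (1 - x) ^ 2 * (x * (1 - x)) ^ (-(5 / 2) : ℝ)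

noncomputable def kappaBasePrimitive (x : ℝ) : ℝ :=
  -(2 / 3) * (1 + 2 * x) * x ^ (-(3 / 2) : ℝ) * (1 - x) ^ (1 / 2 : ℝ)

lemma kappaBase_eq_rpow_mul_rpow {x : ℝ} (hx : x ∈ Ioo (0 : ℝ) 1) :
    kappaBase x = x ^ (-(5 / 2) : ℝ) * (1 - x) ^ (-(1 / 2) : ℝ) := by
  have h1x : 0 < 1 - x := by linarith [hx.2]
  rw [kappaBase, mul_rpow hx.1.le h1x.le, mul_left_comm, ← rpow_natCast, ← rpow_add h1x]
  norm_num

lemma kappaBase_nonneg {x : ℝ} (hx : x ∈ Ioo (0 : ℝ) 1) : 0 ≤ kappaBase x := by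
  have h1x : 0 < 1 - x := by linarith [hx.2]
  have hx0 := hx.1
  unfold kappaBase
  positivity

lemma hasDerivAt_kappaBasePrimitive {x : ℝ} (hx : x ∈ Ioo (0 : ℝ) 1) :
    HasDerivAt kappaBasePrimitive (kappaBase x) x := by
  obtain ⟨hx0, hx1⟩ := hx
  have h1x : 0 < 1 - x := by linarith
  have hpow := hasDerivAt_rpow_const (p := -(3 / 2)) (Or.inl hx0.ne')
  have hsqrt := ((hasDerivAt_id x).const_sub 1).rpow_const (p := 1 / 2) (Or.inl h1x.ne')
  have h := ((((hasDerivAt_id' x).const_mul 2).const_add 1).const_mul (-(2 / 3))).fun_mul hpow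
    |>.fun_mul hsqrt
  refine h.congr_deriv ?_
  have hA : x ^ (-(3 / 2) : ℝ) = x * x ^ (-(5 / 2) : ℝ) := by
    rw [← rpow_one_add' hx0.le (by norm_num)]; norm_num
  have hB : (1 - x) ^ (1 / 2 : ℝ) = (1 - x) * (1 - x) ^ (-(1 / 2) : ℝ) := by
    rw [← rpow_one_add' h1x.le (by norm_num)]; norm_num
  rw [kappaBase_eq_rpow_mul_rpow ⟨hx0, hx1⟩]
  norm_num [hA, hB]
  ring

lemma continuousOn_kappaBasePrimitive : ContinuousOn kappaBasePrimitive (Ioc 0 1) := by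
  intro x hx
  have hx0 : x ≠ 0 := hx.1.ne'
  unfold kappaBasePrimitive
  fun_prop (disch := first | exact Or.inl hx0 | norm_num)

lemma intervalIntegrable_kappaBase {a : ℝ} (ha : 0 < a) (ha1 : a ≤ 1) :
    IntervalIntegrable kappaBase volume a 1 := by
  refine intervalIntegrable_deriv_of_nonneg (g := kappaBasePrimitive) ?_ ?_ ?_
  · rw [uIcc_of_le ha1]
    exact continuousOn_kappaBasePrimitive.mono fun x hx => ⟨ha.trans_le hx.1, hx.2⟩
  all_goals
    rw [min_eq_left ha1, max_eq_right ha1]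
    intro x hx
    have hx' : x ∈ Ioo (0 : ℝ) 1 := ⟨ha.trans hx.1, hx.2⟩
  · exact hasDerivAt_kappaBasePrimitive hx'
  · exact kappaBase_nonneg hx'

lemma integral_kappaBase : ∫ x in (1 / 2 : ℝ)..1, kappaBase x = 8 / 3 := by
  rw [integral_eq_sub_of_hasDerivAt_of_le (by norm_num)
    (continuousOn_kappaBasePrimitive.mono fun x hx => ⟨by linarith [hx.1], hx.2⟩)
    (fun x hx => hasDerivAt_kappaBasePrimitive ⟨by linarith [hx.1], hx.2⟩)
    (intervalIntegrable_kappaBase (by norm_num) (by norm_num))]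
  have h : (1 / 2 : ℝ) ^ (-(3 / 2) : ℝ) * (1 / 2 : ℝ) ^ (1 / 2 : ℝ) = 2 := by
    rw [← rpow_add (by norm_num)]; norm_num
  norm_num [kappaBasePrimitive]
  rw [mul_assoc, h]
  norm_num

lemma mem_kappaDomain_and_kappa_eq_zero {q : ℝ} (hq : 0 < q)
    (h : ∀ x, kappaNumerator q x = q * (1 - x) ^ 2) : q ∈ kappaDomain ∧ kappa q = 0 := by
  have hf : kappaIntegrand q = fun x => q * kappaBase x :=
    funext fun x => by rw [kappaIntegrand_eq, h, kappaBase]; ring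
  refine ⟨⟨hq, ?_⟩, ?_⟩
  · rw [hf]
    exact (intervalIntegrable_kappaBase (by norm_num) (by norm_num)).const_mul q
  · rw [kappa, hf, intervalIntegral.integral_const_mul, integral_kappaBase]
    ring

/-- `{q > 0 : κ(q) ≤ 0} = [2,3]`: the set of `q > 0` where `κ(q)` is finite (the integral
converges) and `≤ 0` is exactly the interval `[2,3]`. -/
theorem kappa_nonpos_set :
    {q : ℝ | 0 < q ∧
        IntervalIntegrable (kappaIntegrand q) MeasureTheory.volume (1 / 2) 1 ∧
        kappa q ≤ 0}
      = Set.Icc 2 3 := by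
  obtain ⟨h2, hk2⟩ := mem_kappaDomain_and_kappa_eq_zero two_pos kappaNumerator_two
  obtain ⟨h3, hk3⟩ := mem_kappaDomain_and_kappa_eq_zero three_pos kappaNumerator_three
  rw [← strictConvexOn_kappa.setOf_nonpos_eq_Icc (by norm_num) h2 h3 hk2 hk3]
  simp only [kappaDomain, mem_ofPred_eq, and_assoc]
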